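/- arXiv:2203.06703 — 13 statements merged into one kernel-verified Lean document; each statement's English description precedes it below -/
import Mathlib

section
/- Assume: (i) for each β ∈ [0,1] the set {(θ,y) ∈ 𝕋 × 𝕐 : π_y(θ) ≤ β} is measurable and the strong validity bound holds, namely (Q ⊗ P){(θ,y) : π_y(θ) ≤ β} ≤ β for every Q ∈ 𝒬 and β ∈ [0,1]. For α ∈ [0,1] define the 100(1−α)% plausibility region C_α(y) = ⋂ {A ⊆ 𝕋 : 1 − Π̄_y(Aᶜ) > 1 − α}. Then the non-coverage event {(θ,y) : θ ∉ C_α(y)} is equal to {(θ,y) : π_y(θ) < α}, and consequently (Q ⊗ P){(θ,y) : θ ∉ C_α(y)} ≤ α for every Q ∈ 𝒬, i.e., C_α is a 100(1−α)% confidence region relative to 𝒬. -/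
open MeasureTheory ProbabilityTheory Set
open scoped ENNReal

/-- The `100(1-α)%` plausibility region
`C_α(y) = ⋂ {A ⊆ 𝕋 : 1 - Π̄_y(Aᶜ) > 1 - α}`. -/
noncomputable def plausRegion {𝕋 𝕐 : Type*} (Pi : 𝕐 → Set 𝕋 → ℝ≥0∞) (α : ℝ≥0∞)
    (y : 𝕐) : Set 𝕋 :=
  ⋂₀ {A : Set 𝕋 | 1 - α < 1 - Pi y Aᶜ}

/-- Truncated subtraction makes `1 - b = 0` for `b > 1`, and then both sides are false. -/
lemma ENNReal.one_sub_lt_one_sub_iff {a b : ℝ≥0∞} (ha : a ≤ 1) :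
    1 - a < 1 - b ↔ b < a := by
  rcases le_total b 1 with hb | hb
  · exact (ENNReal.cancel_of_ne (ha.trans_lt ENNReal.one_lt_top).ne)
      |>.tsub_lt_tsub_iff_left_of_le_of_le
        (ENNReal.cancel_of_ne (ENNReal.sub_ne_top ENNReal.one_ne_top)) ha hb
  · rw [tsub_eq_zero_of_le hb]
    exact ⟨fun h => absurd h not_lt_zero, fun h => absurd (h.trans_le ha) (not_lt.2 hb)⟩

/-- By monotonicity, `{θ}ᶜ` is the largest set whose complement contains `θ`, so it alone
decides whether `θ` is cut out of the region. -/
theorem notMem_plausRegion_iff {𝕋 𝕐 : Type*} {Pi : 𝕐 → Set 𝕋 → ℝ≥0∞} {y : 𝕐}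
    (hmono : Monotone (Pi y)) {α : ℝ≥0∞} (hα : α ≤ 1) {θ : 𝕋} :
    θ ∉ plausRegion Pi α y ↔ Pi y {θ} < α := by
  simp only [plausRegion, mem_sInter, not_forall, mem_ofPred_eq,
    ENNReal.one_sub_lt_one_sub_iff hα, exists_prop]
  constructor
  · rintro ⟨A, hA, hθA⟩
    exact (hmono (singleton_subset_iff.2 hθA)).trans_lt hA
  · intro h
    exact ⟨{θ}ᶜ, by rwa [compl_compl], fun hθ => hθ rfl⟩

/-- Continuity from below along a sequence `β ↑ α`. -/
theorem measure_setOf_lt_le_of_measure_setOf_le {X : Type*} [MeasurableSpace X] (μ : Measure X)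
    (f : X → ℝ≥0∞) {α : ℝ≥0∞} (h : ∀ β < α, μ {x | f x ≤ β} ≤ β) : μ {x | f x < α} ≤ α := by
  rcases eq_or_ne α 0 with rfl | hα0
  · simp
  obtain ⟨u, hu_mono, hu_mem, hu_tendsto⟩ := exists_seq_strictMono_tendsto' hα0.bot_lt
  have hunion : {x | f x < α} = ⋃ n, {x | f x ≤ u n} := by
    ext x
    simp only [mem_ofPred_eq, mem_iUnion]
    refine ⟨fun hx => ?_, fun ⟨n, hn⟩ => hn.trans_lt (hu_mem n).2⟩
    obtain ⟨n, hn⟩ := (hu_tendsto.eventually (eventually_gt_nhds hx)).exists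
    exact ⟨n, hn.le⟩
  have hmono : Monotone fun n => {x | f x ≤ u n} :=
    fun m n hmn x hx => le_trans hx (hu_mono.monotone hmn)
  rw [hunion, hmono.measure_iUnion]
  exact iSup_le fun n => (h (u n) (hu_mem n).2).trans (hu_mem n).2.le

theorem stmt1_general {𝕋 𝕐 : Type*} [MeasurableSpace 𝕋] [MeasurableSpace 𝕐]
    (P : Kernel 𝕋 𝕐)
    (𝒬 : Set (Measure 𝕋))
    (Pi : 𝕐 → Set 𝕋 → ℝ≥0∞)
    (hmono : ∀ y : 𝕐, ∀ A B : Set 𝕋, A ⊆ B → Pi y A ≤ Pi y B)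
    (hvalid : ∀ Q ∈ 𝒬, ∀ β : ℝ≥0∞, β ≤ 1 →
      (Q ⊗ₘ P) {p : 𝕋 × 𝕐 | Pi p.2 {p.1} ≤ β} ≤ β)
    (α : ℝ≥0∞) (hα : α ≤ 1) :
    {p : 𝕋 × 𝕐 | p.1 ∉ plausRegion Pi α p.2} = {p : 𝕋 × 𝕐 | Pi p.2 {p.1} < α} ∧
      ∀ Q ∈ 𝒬, (Q ⊗ₘ P) {p : 𝕋 × 𝕐 | p.1 ∉ plausRegion Pi α p.2} ≤ α := by
  have hset : {p : 𝕋 × 𝕐 | p.1 ∉ plausRegion Pi α p.2} = {p : 𝕋 × 𝕐 | Pi p.2 {p.1} < α} :=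
    ext fun _ => notMem_plausRegion_iff (fun A B => hmono _ A B) hα
  refine ⟨hset, fun Q hQ => ?_⟩
  rw [hset]
  exact measure_setOf_lt_le_of_measure_setOf_le _ (fun p : 𝕋 × 𝕐 => Pi p.2 {p.1})
    fun β hβ => hvalid Q hQ β (hβ.le.trans hα)

/-- Theorem 1, Part 2: under strong validity, the non-coverage event of the plausibility
region equals `{π_y(θ) < α}`, and its joint probability under any `Q ⊗ P`, `Q ∈ 𝒬`,
is at most `α`; i.e., `C_α` is a `100(1-α)%` confidence region relative to `𝒬`. -/
theorem stmt1 {𝕋 𝕐 : Type*} [MeasurableSpace 𝕋] [MeasurableSpace 𝕐]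
    (P : Kernel 𝕋 𝕐) [IsMarkovKernel P]
    (𝒬 : Set (Measure 𝕋)) (h𝒬 : ∀ Q ∈ 𝒬, IsProbabilityMeasure Q)
    (Pi : 𝕐 → Set 𝕋 → ℝ≥0∞)
    (hmono : ∀ y : 𝕐, ∀ A B : Set 𝕋, A ⊆ B → Pi y A ≤ Pi y B)
    (hempty : ∀ y, Pi y (∅ : Set 𝕋) = 0) (huniv : ∀ y, Pi y (univ : Set 𝕋) = 1)
    (hle1 : ∀ y A, Pi y A ≤ 1)
    (hmeas : ∀ β : ℝ≥0∞, β ≤ 1 → MeasurableSet {p : 𝕋 × 𝕐 | Pi p.2 {p.1} ≤ β})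
    (hvalid : ∀ Q ∈ 𝒬, ∀ β : ℝ≥0∞, β ≤ 1 →
      (Q ⊗ₘ P) {p : 𝕋 × 𝕐 | Pi p.2 {p.1} ≤ β} ≤ β)
    (α : ℝ≥0∞) (hα : α ≤ 1) :
    {p : 𝕋 × 𝕐 | p.1 ∉ plausRegion Pi α p.2} = {p : 𝕋 × 𝕐 | Pi p.2 {p.1} < α} ∧
      ∀ Q ∈ 𝒬, (Q ⊗ₘ P) {p : 𝕋 × 𝕐 | p.1 ∉ plausRegion Pi α p.2} ≤ α :=
  stmt1_general P 𝒬 Pi hmono hvalid α hα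
end

section
/- Let A ⊆ 𝕋 be measurable and let α ∈ [0,1] satisfy α < Q̄(A). Suppose y ↦ Π̄_y(A) is measurable and the IM experiences almost-sure contraction at A: P θ {y : Π̄_y(A) ≤ α} = 1 for every θ ∈ A. Then ⨆_{Q ∈ 𝒬} (Q ⊗ P){(θ,y) : Π̄_y(A) ≤ α and θ ∈ A} = Q̄(A) > α; in particular, the validity bound (that this upper joint probability be at most α) fails at A, so the IM is not 𝒜′-valid relative to 𝒬 for any collection 𝒜′ containing A. -/
open MeasureTheory ProbabilityTheory Set
open scoped ENNReal

theorem MeasureTheory.Measure.compProd_prod_eq_of_forall_apply_eq_one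
    {α β : Type*} [MeasurableSpace α] [MeasurableSpace β]
    {μ : Measure α} [SFinite μ] {κ : Kernel α β} [IsSFiniteKernel κ]
    {s : Set α} {t : Set β} (hs : MeasurableSet s) (ht : MeasurableSet t)
    (h : ∀ a ∈ s, κ a t = 1) :
    (μ ⊗ₘ κ) (s ×ˢ t) = μ s := by
  rw [Measure.compProd_apply_prod hs ht, setLIntegral_congr_fun hs h, setLIntegral_one]

theorem stmt2_general {𝕋 𝕐 : Type*} [MeasurableSpace 𝕋] [MeasurableSpace 𝕐]
    (P : Kernel 𝕋 𝕐) [IsMarkovKernel P]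
    (𝒬 : Set (Measure 𝕋)) (h𝒬 : ∀ Q ∈ 𝒬, IsProbabilityMeasure Q)
    (Pi : 𝕐 → Set 𝕋 → ℝ≥0∞)
    (A : Set 𝕋) (hA : MeasurableSet A)
    (hmeas : Measurable fun y => Pi y A)
    (α : ℝ≥0∞)
    (hαQ : α < ⨆ Q ∈ 𝒬, Q A)
    (hcontract : ∀ θ ∈ A, P θ {y | Pi y A ≤ α} = 1) :
    (⨆ Q ∈ 𝒬, (Q ⊗ₘ P) {p : 𝕋 × 𝕐 | Pi p.2 A ≤ α ∧ p.1 ∈ A}) = (⨆ Q ∈ 𝒬, Q A) ∧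
      α < ⨆ Q ∈ 𝒬, (Q ⊗ₘ P) {p : 𝕋 × 𝕐 | Pi p.2 A ≤ α ∧ p.1 ∈ A} := by
  have hrect : {p : 𝕋 × 𝕐 | Pi p.2 A ≤ α ∧ p.1 ∈ A} = A ×ˢ {y | Pi y A ≤ α} := by
    ext p
    exact and_comm
  have hjoint : (⨆ Q ∈ 𝒬, (Q ⊗ₘ P) {p : 𝕋 × 𝕐 | Pi p.2 A ≤ α ∧ p.1 ∈ A}) = ⨆ Q ∈ 𝒬, Q A := by
    refine iSup_congr fun Q => iSup_congr fun hQ => ?_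
    have := h𝒬 Q hQ
    rw [hrect]
    exact Measure.compProd_prod_eq_of_forall_apply_eq_one hA
      (measurableSet_le hmeas measurable_const) hcontract
  exact ⟨hjoint, hjoint ▸ hαQ⟩

/-- Theorem 2: if the IM almost-surely contracts at `A` (for some `α < Q̄(A)`, the event
`Π̄_Y(A) ≤ α` has `P θ`-probability one for every `θ ∈ A`), then the upper joint
probability of `{Π̄_Y(A) ≤ α, Θ ∈ A}` equals `Q̄(A) > α`; in particular the validity
bound at `A` fails, so the IM is not `𝒜'`-valid for any `𝒜'` containing `A`. -/
theorem stmt2 {𝕋 𝕐 : Type*} [MeasurableSpace 𝕋] [MeasurableSpace 𝕐]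
    (P : Kernel 𝕋 𝕐) [IsMarkovKernel P]
    (𝒬 : Set (Measure 𝕋)) (h𝒬 : ∀ Q ∈ 𝒬, IsProbabilityMeasure Q)
    (Pi : 𝕐 → Set 𝕋 → ℝ≥0∞) (hle1 : ∀ y A, Pi y A ≤ 1)
    (A : Set 𝕋) (hA : MeasurableSet A)
    (hmeas : Measurable fun y => Pi y A)
    (α : ℝ≥0∞) (hα1 : α ≤ 1)
    (hαQ : α < ⨆ Q ∈ 𝒬, Q A)
    (hcontract : ∀ θ ∈ A, P θ {y | Pi y A ≤ α} = 1) :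
    (⨆ Q ∈ 𝒬, (Q ⊗ₘ P) {p : 𝕋 × 𝕐 | Pi p.2 A ≤ α ∧ p.1 ∈ A}) = (⨆ Q ∈ 𝒬, Q A) ∧
      α < ⨆ Q ∈ 𝒬, (Q ⊗ₘ P) {p : 𝕋 × 𝕐 | Pi p.2 A ≤ α ∧ p.1 ∈ A} :=
  stmt2_general P 𝒬 h𝒬 Pi A hA hmeas α hαQ hcontract
end

section
/- Suppose the IM output is a probability measure: Π : 𝕐 → (probability measures on 𝕋), with y ↦ Π_y(A) measurable for each measurable A. Suppose there exist a nonempty measurable set A ⊆ 𝕋 and α < 1 such that P θ {y : Π_y(A) ≤ α} = 1 for every θ ∈ A. Then, with 𝒬 taken to be the set of ALL probability measures on 𝕋 (the vacuous prior), ⨆_{Q ∈ 𝒬} (Q ⊗ P){(θ,y) : Π_y(A) ≤ α and θ ∈ A} = 1 > α; hence the precise-probability IM fails to be valid relative to the vacuous prior. -/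
/-!
Every Dirac prior `δ_θ` with `θ ∈ A` is admissible in the vacuous credal set, and under it the
joint probability of `{Π_Y(A) ≤ α, Θ ∈ A}` is `P θ {y | Π_y(A) ≤ α} = 1`. Since all the joint
measures are probability measures, the upper probability is exactly `1`, which exceeds `α`.
-/

open MeasureTheory ProbabilityTheory Set
open scoped ENNReal

section

variable {𝕋 𝕐 : Type*} [MeasurableSpace 𝕋] [MeasurableSpace 𝕐]

lemma MeasureTheory.Measure.dirac_compProd_apply' (P : Kernel 𝕋 𝕐) [IsSFiniteKernel P]
    (θ : 𝕋) {s : Set (𝕋 × 𝕐)} (hs : MeasurableSet s) :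
    (Measure.dirac θ ⊗ₘ P) s = P θ (Prod.mk θ ⁻¹' s) := by
  rw [Measure.compProd_apply hs, lintegral_dirac' θ (Kernel.measurable_kernel_prodMk_left hs)]

lemma ProbabilityTheory.iSup_isProbabilityMeasure_compProd_eq_one (P : Kernel 𝕋 𝕐)
    [IsMarkovKernel P] {s : Set (𝕋 × 𝕐)} (hs : MeasurableSet s) {θ : 𝕋}
    (hθ : P θ (Prod.mk θ ⁻¹' s) = 1) :
    ⨆ Q ∈ {Q : Measure 𝕋 | IsProbabilityMeasure Q}, (Q ⊗ₘ P) s = 1 := by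
  refine le_antisymm (iSup₂_le fun Q (_ : IsProbabilityMeasure Q) => prob_le_one) ?_
  calc (1 : ℝ≥0∞) = (Measure.dirac θ ⊗ₘ P) s := by
        rw [Measure.dirac_compProd_apply' P θ hs, hθ]
    _ ≤ ⨆ Q ∈ {Q : Measure 𝕋 | IsProbabilityMeasure Q}, (Q ⊗ₘ P) s :=
        le_iSup₂ (f := fun Q (_ : IsProbabilityMeasure Q) => (Q ⊗ₘ P) s) (Measure.dirac θ)
          inferInstance

end

theorem stmt3_general {𝕋 𝕐 : Type*} [MeasurableSpace 𝕋] [MeasurableSpace 𝕐]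
    (P : Kernel 𝕋 𝕐) [IsMarkovKernel P]
    (Pi : 𝕐 → Measure 𝕋)
    (hPimeas : ∀ B : Set 𝕋, MeasurableSet B → Measurable fun y => Pi y B)
    (A : Set 𝕋) (hAne : A.Nonempty) (hA : MeasurableSet A)
    (α : ℝ≥0∞) (hα : α < 1)
    (hcontract : ∀ θ ∈ A, P θ {y | Pi y A ≤ α} = 1) :
    (⨆ Q ∈ {Q : Measure 𝕋 | IsProbabilityMeasure Q},
        (Q ⊗ₘ P) {p : 𝕋 × 𝕐 | Pi p.2 A ≤ α ∧ p.1 ∈ A}) = 1 ∧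
      α < ⨆ Q ∈ {Q : Measure 𝕋 | IsProbabilityMeasure Q},
        (Q ⊗ₘ P) {p : 𝕋 × 𝕐 | Pi p.2 A ≤ α ∧ p.1 ∈ A} := by
  obtain ⟨θ, hθA⟩ := hAne
  have hmeas : MeasurableSet {p : 𝕋 × 𝕐 | Pi p.2 A ≤ α ∧ p.1 ∈ A} :=
    (((hPimeas A hA).comp measurable_snd) measurableSet_Iic).inter (measurable_fst hA)
  have hslice : Prod.mk θ ⁻¹' {p : 𝕋 × 𝕐 | Pi p.2 A ≤ α ∧ p.1 ∈ A} = {y | Pi y A ≤ α} := by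
    ext y
    simp [hθA]
  have hsup := iSup_isProbabilityMeasure_compProd_eq_one P hmeas
    (hslice ▸ hcontract θ hθA)
  exact ⟨hsup, hsup ▸ hα⟩

/-- Corollary 2 (a weak false confidence theorem): if the IM output is a probability
measure `Π_y` and there are a nonempty measurable `A ⊆ 𝕋` and `α < 1` with
`P θ {y : Π_y(A) ≤ α} = 1` for every `θ ∈ A`, then, with `𝒬` the set of all probability
measures on `𝕋` (the vacuous prior), the upper joint probability of
`{Π_Y(A) ≤ α, Θ ∈ A}` equals `1 > α`; hence the precise-probability IM is not valid
relative to the vacuous prior. -/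
theorem stmt3 {𝕋 𝕐 : Type*} [MeasurableSpace 𝕋] [MeasurableSpace 𝕐]
    [MeasurableSingletonClass 𝕋]
    (P : Kernel 𝕋 𝕐) [IsMarkovKernel P]
    (Pi : 𝕐 → Measure 𝕋) (hPiProb : ∀ y, IsProbabilityMeasure (Pi y))
    (hPimeas : ∀ B : Set 𝕋, MeasurableSet B → Measurable fun y => Pi y B)
    (A : Set 𝕋) (hAne : A.Nonempty) (hA : MeasurableSet A)
    (α : ℝ≥0∞) (hα : α < 1)
    (hcontract : ∀ θ ∈ A, P θ {y | Pi y A ≤ α} = 1) :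
    (⨆ Q ∈ {Q : Measure 𝕋 | IsProbabilityMeasure Q},
        (Q ⊗ₘ P) {p : 𝕋 × 𝕐 | Pi p.2 A ≤ α ∧ p.1 ∈ A}) = 1 ∧
      α < ⨆ Q ∈ {Q : Measure 𝕋 | IsProbabilityMeasure Q},
        (Q ⊗ₘ P) {p : 𝕋 × 𝕐 | Pi p.2 A ≤ α ∧ p.1 ∈ A} :=
  stmt3_general P Pi hPimeas A hAne hA α hα hcontract
end

section
/- Let A ⊆ 𝕋 be measurable, let y ↦ Π̄_y(A) be measurable with 0 < Π̄_y(A) ≤ 1 for every y, and suppose that for every Q ∈ 𝒬 there exist a probability measure m_Q on 𝕐 and a Markov kernel ν_Q from 𝕐 to 𝕋 disintegrating the joint distribution, i.e., (Q ⊗ P).map Prod.swap = m_Q ⊗ ν_Q (so ν_Q(y) is the Bayesian posterior Q(· | y) and m_Q is the marginal distribution of Y under prior Q). If the dominance condition ∫ ν_Q(y)(A) / Π̄_y(A) dm_Q(y) ≤ 1 holds for every Q ∈ 𝒬, then for every α ∈ [0,1]: ⨆_{Q ∈ 𝒬} (Q ⊗ P){(θ,y) : Π̄_y(A) ≤ α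 and θ ∈ A} ≤ α. -/
open MeasureTheory ProbabilityTheory Set
open scoped ENNReal

/-! Swapping coordinates, the event `{Π̄_y(A) ≤ α, θ ∈ A}` has probability
`∫_{Π̄_y(A) ≤ α} ν_Q(y)(A) dm_Q(y)` under the disintegration. On that event
`ν_Q(y)(A) ≤ α · ν_Q(y)(A) / Π̄_y(A)`, so a Markov-type bound and the dominance condition
give at most `α`. -/

theorem ENNReal.le_div_mul_of_le {a b c : ℝ≥0∞} (hb : b ≠ 0) (hc : c ≠ ∞) (hbc : b ≤ c) :
    a ≤ a / b * c :=
  calc a = a / b * b := (ENNReal.div_mul_cancel hb (ne_top_of_le_ne_top hc hbc)).symm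
    _ ≤ a / b * c := mul_le_mul_right hbc _

theorem MeasureTheory.setLIntegral_le_lintegral_div_mul {X : Type*} [MeasurableSpace X]
    {μ : Measure X} {f g : X → ℝ≥0∞} (hf : Measurable f) (hf0 : ∀ x, f x ≠ 0)
    {α : ℝ≥0∞} (hα : α ≠ ∞) :
    ∫⁻ x in {x | f x ≤ α}, g x ∂μ ≤ (∫⁻ x, g x / f x ∂μ) * α :=
  calc ∫⁻ x in {x | f x ≤ α}, g x ∂μ ≤ ∫⁻ x in {x | f x ≤ α}, g x / f x * α ∂μ :=
        setLIntegral_mono' (hf measurableSet_Iic) fun x hx =>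
          ENNReal.le_div_mul_of_le (hf0 x) hα hx
    _ ≤ ∫⁻ x, g x / f x * α ∂μ := setLIntegral_le_lintegral _ _
    _ = (∫⁻ x, g x / f x ∂μ) * α := lintegral_mul_const' _ _ hα

theorem stmt4_general {𝕋 𝕐 : Type*} [MeasurableSpace 𝕋] [MeasurableSpace 𝕐]
    (P : Kernel 𝕋 𝕐)
    (𝒬 : Set (Measure 𝕋))
    (Pi : 𝕐 → Set 𝕋 → ℝ≥0∞)
    (A : Set 𝕋) (hA : MeasurableSet A)
    (hmeas : Measurable fun y => Pi y A)
    (hpos : ∀ y, 0 < Pi y A)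
    (m : Measure 𝕋 → Measure 𝕐) (ν : Measure 𝕋 → Kernel 𝕐 𝕋)
    (hm : ∀ Q ∈ 𝒬, IsProbabilityMeasure (m Q))
    (hν : ∀ Q ∈ 𝒬, IsMarkovKernel (ν Q))
    (hdisint : ∀ Q ∈ 𝒬, (Q ⊗ₘ P).map Prod.swap = (m Q) ⊗ₘ (ν Q))
    (hdom : ∀ Q ∈ 𝒬, ∫⁻ y, (ν Q) y A / Pi y A ∂(m Q) ≤ 1)
    (α : ℝ≥0∞) (hα : α ≤ 1) :
    (⨆ Q ∈ 𝒬, (Q ⊗ₘ P) {p : 𝕋 × 𝕐 | Pi p.2 A ≤ α ∧ p.1 ∈ A}) ≤ α := by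
  refine iSup₂_le fun Q hQ => ?_
  have := hm Q hQ
  have := hν Q hQ
  have hS : MeasurableSet {y | Pi y A ≤ α} := hmeas measurableSet_Iic
  have hswap : {p : 𝕋 × 𝕐 | Pi p.2 A ≤ α ∧ p.1 ∈ A} =
      Prod.swap ⁻¹' ({y | Pi y A ≤ α} ×ˢ A) := rfl
  calc (Q ⊗ₘ P) {p : 𝕋 × 𝕐 | Pi p.2 A ≤ α ∧ p.1 ∈ A}
      = ∫⁻ y in {y | Pi y A ≤ α}, ν Q y A ∂(m Q) := by
        rw [hswap, ← Measure.map_apply measurable_swap (hS.prod hA), hdisint Q hQ,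
          Measure.compProd_apply_prod hS hA]
    _ ≤ (∫⁻ y, ν Q y A / Pi y A ∂(m Q)) * α :=
        setLIntegral_le_lintegral_div_mul hmeas (fun y => (hpos y).ne')
          (ne_top_of_le_ne_top ENNReal.one_ne_top hα)
    _ ≤ α := mul_le_of_le_one_left' (hdom Q hQ)

/-- Proposition 1: if, for every prior `Q` in the credal set `𝒬`, the joint distribution
disintegrates as `(Q ⊗ P).map Prod.swap = m_Q ⊗ ν_Q` (posterior `ν_Q(y) = Q(· | y)`,
marginal `m_Q`), and the dominance condition `∫ ν_Q(y)(A) / Π̄_y(A) dm_Q(y) ≤ 1` holds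
for every `Q ∈ 𝒬`, then the IM is valid at `A` relative to `𝒬`: for every `α ∈ [0,1]`,
`⨆_{Q ∈ 𝒬} (Q ⊗ P){(θ,y) : Π̄_y(A) ≤ α ∧ θ ∈ A} ≤ α`. -/
theorem stmt4 {𝕋 𝕐 : Type*} [MeasurableSpace 𝕋] [MeasurableSpace 𝕐]
    (P : Kernel 𝕋 𝕐) [IsMarkovKernel P]
    (𝒬 : Set (Measure 𝕋)) (h𝒬 : ∀ Q ∈ 𝒬, IsProbabilityMeasure Q)
    (Pi : 𝕐 → Set 𝕋 → ℝ≥0∞)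
    (A : Set 𝕋) (hA : MeasurableSet A)
    (hmeas : Measurable fun y => Pi y A)
    (hpos : ∀ y, 0 < Pi y A) (hle1 : ∀ y, Pi y A ≤ 1)
    (m : Measure 𝕋 → Measure 𝕐) (ν : Measure 𝕋 → Kernel 𝕐 𝕋)
    (hm : ∀ Q ∈ 𝒬, IsProbabilityMeasure (m Q))
    (hν : ∀ Q ∈ 𝒬, IsMarkovKernel (ν Q))
    (hdisint : ∀ Q ∈ 𝒬, (Q ⊗ₘ P).map Prod.swap = (m Q) ⊗ₘ (ν Q))
    (hdom : ∀ Q ∈ 𝒬, ∫⁻ y, (ν Q) y A / Pi y A ∂(m Q) ≤ 1)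
    (α : ℝ≥0∞) (hα : α ≤ 1) :
    (⨆ Q ∈ 𝒬, (Q ⊗ₘ P) {p : 𝕋 × 𝕐 | Pi p.2 A ≤ α ∧ p.1 ∈ A}) ≤ α :=
  stmt4_general P 𝒬 Pi A hA hmeas hpos m ν hm hν hdisint hdom α hα
end

section
/- Suppose that for every Q ∈ 𝒬 there exist a probability measure m_Q on 𝕐 and a Markov kernel ν_Q from 𝕐 to 𝕋 with (Q ⊗ P).map Prod.swap = m_Q ⊗ ν_Q (so ν_Q(y) is the Bayesian posterior Q(· | y)). Define the generalized-Bayes upper probability Π̄_y(A) = ⨆_{Q ∈ 𝒬} ν_Q(y)(A). Let A ⊆ 𝕋 be measurable and assume y ↦ Π̄_y(A) is measurable. Then for every α ∈ [0,1]: ⨆_{Q ∈ 𝒬} (Q ⊗ P){(θ,y) : Π̄_y(A) ≤ α and θ ∈ A} ≤ α; i.e., the generalized Bayes IM is valid relative to 𝒬. -/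
open MeasureTheory ProbabilityTheory Set
open scoped ENNReal

/-!
Under `Q ∈ 𝒬`, the swapped joint law is `m_Q ⊗ ν_Q`, so the `Q ⊗ P`-probability of the event
`{Π̄_y(A) ≤ α, θ ∈ A}` is `∫ ν_Q(y)(A) dm_Q` over `{y | Π̄_y(A) ≤ α}`. On that set the integrand is
at most `Π̄_y(A) ≤ α`, since `ν_Q(y)(A)` is one of the terms of the supremum defining `Π̄_y(A)`.
-/

lemma MeasureTheory.Measure.compProd_preimage_Iic_prod_le {𝕐 𝕋 : Type*} [MeasurableSpace 𝕐]
    [MeasurableSpace 𝕋] (m : Measure 𝕐) [SFinite m] (κ : Kernel 𝕐 𝕋) [IsSFiniteKernel κ]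
    {g : 𝕐 → ℝ≥0∞} (hg : Measurable g) {A : Set 𝕋} (hA : MeasurableSet A)
    (hκg : ∀ y, κ y A ≤ g y) (α : ℝ≥0∞) :
    (m ⊗ₘ κ) ((g ⁻¹' Iic α) ×ˢ A) ≤ α * m (g ⁻¹' Iic α) :=
  calc (m ⊗ₘ κ) ((g ⁻¹' Iic α) ×ˢ A) = ∫⁻ y in g ⁻¹' Iic α, κ y A ∂m :=
        Measure.compProd_apply_prod (hg measurableSet_Iic) hA
    _ ≤ ∫⁻ _ in g ⁻¹' Iic α, α ∂m :=
        setLIntegral_mono measurable_const fun y hy => (hκg y).trans hy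
    _ = α * m (g ⁻¹' Iic α) := setLIntegral_const _ _

theorem stmt5_general {𝕋 𝕐 : Type*} [MeasurableSpace 𝕋] [MeasurableSpace 𝕐]
    (P : Kernel 𝕋 𝕐)
    (𝒬 : Set (Measure 𝕋))
    (m : Measure 𝕋 → Measure 𝕐) (ν : Measure 𝕋 → Kernel 𝕐 𝕋)
    (hm : ∀ Q ∈ 𝒬, IsProbabilityMeasure (m Q))
    (hν : ∀ Q ∈ 𝒬, IsMarkovKernel (ν Q))
    (hdisint : ∀ Q ∈ 𝒬, (Q ⊗ₘ P).map Prod.swap = (m Q) ⊗ₘ (ν Q))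
    (A : Set 𝕋) (hA : MeasurableSet A)
    (hmeas : Measurable fun y => ⨆ Q ∈ 𝒬, (ν Q) y A)
    (α : ℝ≥0∞) :
    (⨆ Q ∈ 𝒬, (Q ⊗ₘ P) {p : 𝕋 × 𝕐 | (⨆ Q' ∈ 𝒬, (ν Q') p.2 A) ≤ α ∧ p.1 ∈ A}) ≤ α := by
  refine iSup₂_le fun Q hQ => ?_
  have := hm Q hQ
  have := hν Q hQ
  set upperProb : 𝕐 → ℝ≥0∞ := fun y => ⨆ Q' ∈ 𝒬, (ν Q') y A
  have hposterior_le : ∀ y, ν Q y A ≤ upperProb y := fun y => le_biSup (fun Q' => ν Q' y A) hQ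
  calc (Q ⊗ₘ P) {p : 𝕋 × 𝕐 | upperProb p.2 ≤ α ∧ p.1 ∈ A}
        = ((Q ⊗ₘ P).map Prod.swap) ((upperProb ⁻¹' Iic α) ×ˢ A) :=
          (Measure.map_apply measurable_swap ((hmeas measurableSet_Iic).prod hA)).symm
    _ = (m Q ⊗ₘ ν Q) ((upperProb ⁻¹' Iic α) ×ˢ A) := by rw [hdisint Q hQ]
    _ ≤ α * m Q (upperProb ⁻¹' Iic α) :=
          Measure.compProd_preimage_Iic_prod_le _ _ hmeas hA hposterior_le α
    _ ≤ α := mul_le_of_le_one_right' prob_le_one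

/-- Corollary 3 (validity of the generalized Bayes rule): if, for each `Q ∈ 𝒬`, the joint
distribution disintegrates as `(Q ⊗ P).map Prod.swap = m_Q ⊗ ν_Q`, then the
generalized-Bayes upper probability `Π̄_y(A) = ⨆_{Q ∈ 𝒬} ν_Q(y)(A)` is valid relative to
`𝒬`: for every `α ∈ [0,1]`,
`⨆_{Q ∈ 𝒬} (Q ⊗ P){(θ,y) : Π̄_y(A) ≤ α ∧ θ ∈ A} ≤ α`. -/
theorem stmt5 {𝕋 𝕐 : Type*} [MeasurableSpace 𝕋] [MeasurableSpace 𝕐]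
    (P : Kernel 𝕋 𝕐) [IsMarkovKernel P]
    (𝒬 : Set (Measure 𝕋)) (h𝒬 : ∀ Q ∈ 𝒬, IsProbabilityMeasure Q)
    (m : Measure 𝕋 → Measure 𝕐) (ν : Measure 𝕋 → Kernel 𝕐 𝕋)
    (hm : ∀ Q ∈ 𝒬, IsProbabilityMeasure (m Q))
    (hν : ∀ Q ∈ 𝒬, IsMarkovKernel (ν Q))
    (hdisint : ∀ Q ∈ 𝒬, (Q ⊗ₘ P).map Prod.swap = (m Q) ⊗ₘ (ν Q))
    (A : Set 𝕋) (hA : MeasurableSet A)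
    (hmeas : Measurable fun y => ⨆ Q ∈ 𝒬, (ν Q) y A)
    (α : ℝ≥0∞) (hα : α ≤ 1) :
    (⨆ Q ∈ 𝒬, (Q ⊗ₘ P) {p : 𝕋 × 𝕐 | (⨆ Q' ∈ 𝒬, (ν Q') p.2 A) ≤ α ∧ p.1 ∈ A}) ≤ α :=
  stmt5_general P 𝒬 m ν hm hν hdisint A hA hmeas α
end

section
/- Let Q be a probability measure on 𝕋 and suppose there exist a probability measure m on 𝕐 and a Markov kernel ν from 𝕐 to 𝕋 with (Q ⊗ P).map Prod.swap = m ⊗ ν (so ν(y) is the Bayesian posterior distribution of the parameter given Y = y and m is the marginal distribution of Y). Then for every measurable A ⊆ 𝕋 and every α ∈ [0,1]: (Q ⊗ P){(θ,y) : ν(y)(A) ≤ α and θ ∈ A} ≤ α; i.e., the classical Bayesian posterior, viewed as an IM, is valid relative to the singleton credal set {Q}. -/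
open MeasureTheory ProbabilityTheory Set
open scoped ENNReal

/-!
Write `T = {(y, θ) : ν y A ≤ α ∧ θ ∈ A}`. For fixed `y` the section of `T` is `A` when
`ν y A ≤ α` and empty otherwise, so its `ν y`-mass is at most `α` in both cases.
Integrating over `m` bounds `(m ⊗ ν) T` by `α`, and the disintegration identity transports
this to `(Q ⊗ P)`.
-/

lemma measure_setOf_le_and_mem_le {Ω : Type*} [MeasurableSpace Ω] (μ : Measure Ω)
    (A : Set Ω) (α : ℝ≥0∞) : μ {t | μ A ≤ α ∧ t ∈ A} ≤ α := by
  by_cases h : μ A ≤ α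
  · simp [h]
  · simp [h]

lemma compProd_setOf_kernel_le_and_mem_le {𝕐 𝕋 : Type*} [MeasurableSpace 𝕐]
    [MeasurableSpace 𝕋] (m : Measure 𝕐) [IsProbabilityMeasure m] (ν : Kernel 𝕐 𝕋)
    [IsSFiniteKernel ν] {A : Set 𝕋} (hA : MeasurableSet A) (α : ℝ≥0∞) :
    (m ⊗ₘ ν) {q | ν q.1 A ≤ α ∧ q.2 ∈ A} ≤ α := by
  have hT : MeasurableSet {q : 𝕐 × 𝕋 | ν q.1 A ≤ α ∧ q.2 ∈ A} :=
    (measurableSet_le (ν.measurable_coe hA) measurable_const).preimage measurable_fst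
      |>.inter (measurable_snd hA)
  rw [Measure.compProd_apply hT]
  exact lintegral_le_const (.of_forall fun y => measure_setOf_le_and_mem_le (ν y) A α)

theorem stmt6_general {𝕋 𝕐 : Type*} [MeasurableSpace 𝕋] [MeasurableSpace 𝕐]
    (P : Kernel 𝕋 𝕐)
    (Q : Measure 𝕋)
    (m : Measure 𝕐) [IsProbabilityMeasure m]
    (ν : Kernel 𝕐 𝕋) [IsMarkovKernel ν]
    (hdisint : (Q ⊗ₘ P).map Prod.swap = m ⊗ₘ ν)
    (A : Set 𝕋) (hA : MeasurableSet A)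
    (α : ℝ≥0∞) :
    (Q ⊗ₘ P) {p : 𝕋 × 𝕐 | ν p.2 A ≤ α ∧ p.1 ∈ A} ≤ α := by
  calc (Q ⊗ₘ P) {p : 𝕋 × 𝕐 | ν p.2 A ≤ α ∧ p.1 ∈ A}
      ≤ (Q ⊗ₘ P).map Prod.swap {q | ν q.1 A ≤ α ∧ q.2 ∈ A} :=
        Measure.le_map_apply measurable_swap.aemeasurable _
    _ ≤ α := hdisint ▸ compProd_setOf_kernel_le_and_mem_le m ν hA α

/-- The single-prior special case of Corollary 3: if the joint distribution disintegrates
as `(Q ⊗ P).map Prod.swap = m ⊗ ν` (so `ν(y)` is the Bayesian posterior and `m` the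
marginal of the data), then the Bayesian posterior, viewed as an IM, is valid relative to
`{Q}`: for every measurable `A` and `α ∈ [0,1]`,
`(Q ⊗ P){(θ,y) : ν(y)(A) ≤ α ∧ θ ∈ A} ≤ α`. -/
theorem stmt6 {𝕋 𝕐 : Type*} [MeasurableSpace 𝕋] [MeasurableSpace 𝕐]
    (P : Kernel 𝕋 𝕐) [IsMarkovKernel P]
    (Q : Measure 𝕋) [IsProbabilityMeasure Q]
    (m : Measure 𝕐) [IsProbabilityMeasure m]
    (ν : Kernel 𝕐 𝕋) [IsMarkovKernel ν]
    (hdisint : (Q ⊗ₘ P).map Prod.swap = m ⊗ₘ ν)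
    (A : Set 𝕋) (hA : MeasurableSet A)
    (α : ℝ≥0∞) (hα : α ≤ 1) :
    (Q ⊗ₘ P) {p : 𝕋 × 𝕐 | ν p.2 A ≤ α ∧ p.1 ∈ A} ≤ α :=
  stmt6_general P Q m ν hdisint A hA α
end

section
/- Let A ⊆ 𝕋 be measurable with Q̄(A) > 0. Let f : 𝕐 → [0,1] be measurable (f(y) is the vacuous-prior IM's upper probability Π̄⁰_y(A)) and suppose it satisfies vacuous-prior validity at A: P θ {y : f(y) ≤ t} ≤ t for every t ∈ [0,1] and every θ ∈ A. Let g : 𝕐 → [0,1] be measurable (g(y) is the partial-prior IM's upper probability Π̄_y(A)) and suppose the assertion-wise dominance g(y) ≥ f(y) · Q̄(A) holds for every y ∈ 𝕐. Then for every α ∈ [0,1]: ⨆_{Q ∈ 𝒬} (Q ⊗ P){(θ,y) : g(y) ≤ α and θ ∈ A} ≤ α. -/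
/-!
For `θ ∈ A`, dominance gives `{g ≤ α} ⊆ {f ≤ α / Q̄(A)}`, so validity of `f` bounds the
`P θ`-probability of `{g ≤ α}` by `α / Q̄(A)`. Integrating over `A` against any `Q ∈ 𝒬` gives
at most `(α / Q̄(A)) · Q(A) ≤ α`.
-/

open MeasureTheory ProbabilityTheory Set
open scoped ENNReal

section Validity

variable {Ω : Type*} [MeasurableSpace Ω] {μ : Measure Ω} [IsProbabilityMeasure μ]
  {f g : Ω → ℝ≥0∞}

lemma measure_le_le_self_of_forall_le_one (hf : ∀ t ≤ 1, μ {x | f x ≤ t} ≤ t)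
    (t : ℝ≥0∞) : μ {x | f x ≤ t} ≤ t := by
  rcases le_or_gt t 1 with ht | ht
  · exact hf t ht
  · exact prob_le_one.trans ht.le

lemma measure_le_le_div_of_mul_le {c : ℝ≥0∞} (hc₀ : c ≠ 0) (hc : c ≠ ∞)
    (hf : ∀ t ≤ 1, μ {x | f x ≤ t} ≤ t) (hdom : ∀ x, f x * c ≤ g x) (α : ℝ≥0∞) :
    μ {x | g x ≤ α} ≤ α / c :=
  calc μ {x | g x ≤ α} ≤ μ {x | f x ≤ α / c} := measure_mono fun x hx =>
        (ENNReal.le_div_iff_mul_le (.inl hc₀) (.inl hc)).2 ((hdom x).trans hx)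
    _ ≤ α / c := measure_le_le_self_of_forall_le_one hf _

end Validity

lemma MeasureTheory.Measure.compProd_prod_le_mul {α β : Type*}
    [MeasurableSpace α] [MeasurableSpace β]
    {μ : Measure α} [SFinite μ] {κ : Kernel α β} [IsSFiniteKernel κ] {s : Set α} {t : Set β}
    (hs : MeasurableSet s) (ht : MeasurableSet t) {b : ℝ≥0∞} (h : ∀ a ∈ s, κ a t ≤ b) :
    (μ ⊗ₘ κ) (s ×ˢ t) ≤ b * μ s := by
  rw [Measure.compProd_apply_prod hs ht, ← setLIntegral_const]
  exact setLIntegral_mono' hs h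

theorem stmt7_general {𝕋 𝕐 : Type*} [MeasurableSpace 𝕋] [MeasurableSpace 𝕐]
    (P : Kernel 𝕋 𝕐) [IsMarkovKernel P]
    (𝒬 : Set (Measure 𝕋)) (h𝒬 : ∀ Q ∈ 𝒬, IsProbabilityMeasure Q)
    (A : Set 𝕋) (hA : MeasurableSet A)
    (hQbar : 0 < ⨆ Q ∈ 𝒬, Q A)
    (f : 𝕐 → ℝ≥0∞)
    (hfvalid : ∀ θ ∈ A, ∀ t : ℝ≥0∞, t ≤ 1 → P θ {y | f y ≤ t} ≤ t)
    (g : 𝕐 → ℝ≥0∞) (hgmeas : Measurable g)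
    (hdom : ∀ y, f y * (⨆ Q ∈ 𝒬, Q A) ≤ g y)
    (α : ℝ≥0∞) :
    (⨆ Q ∈ 𝒬, (Q ⊗ₘ P) {p : 𝕋 × 𝕐 | g p.2 ≤ α ∧ p.1 ∈ A}) ≤ α := by
  set c := ⨆ Q ∈ 𝒬, Q A
  have hc_le_one : c ≤ 1 := iSup₂_le fun Q hQ => haveI := h𝒬 Q hQ; prob_le_one
  have hc : c ≠ ∞ := ne_top_of_le_ne_top ENNReal.one_ne_top hc_le_one
  refine iSup₂_le fun Q hQ => ?_
  have := h𝒬 Q hQ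
  have hset : {p : 𝕋 × 𝕐 | g p.2 ≤ α ∧ p.1 ∈ A} = A ×ˢ {y | g y ≤ α} := by
    ext; simp [and_comm]
  rw [hset]
  calc (Q ⊗ₘ P) (A ×ˢ {y | g y ≤ α})
      ≤ α / c * Q A := Measure.compProd_prod_le_mul hA (measurableSet_le hgmeas measurable_const)
        fun θ hθ => measure_le_le_div_of_mul_le hQbar.ne' hc (hfvalid θ hθ) hdom α
    _ ≤ α / c * c := by gcongr; exact le_iSup₂ (f := fun Q _ => Q A) Q hQ
    _ = α := ENNReal.div_mul_cancel hQbar.ne' hc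

/-- Proposition 2 (assertion-wise dominance implies validity at `A`): if
`f y = Π̄⁰_y(A)` is a vacuous-prior-valid upper probability at `A`, `Q̄(A) > 0` where
`Q̄(A) = ⨆_{Q ∈ 𝒬} Q(A)`, and the partial-prior IM `g y = Π̄_y(A)` satisfies
`g(y) ≥ f(y) · Q̄(A)` for all `y`, then for every `α ∈ [0,1]`,
`⨆_{Q ∈ 𝒬} (Q ⊗ P){(θ,y) : g(y) ≤ α ∧ θ ∈ A} ≤ α`. -/
theorem stmt7 {𝕋 𝕐 : Type*} [MeasurableSpace 𝕋] [MeasurableSpace 𝕐]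
    (P : Kernel 𝕋 𝕐) [IsMarkovKernel P]
    (𝒬 : Set (Measure 𝕋)) (h𝒬 : ∀ Q ∈ 𝒬, IsProbabilityMeasure Q)
    (A : Set 𝕋) (hA : MeasurableSet A)
    (hQbar : 0 < ⨆ Q ∈ 𝒬, Q A)
    (f : 𝕐 → ℝ≥0∞) (hfmeas : Measurable f) (hf1 : ∀ y, f y ≤ 1)
    (hfvalid : ∀ θ ∈ A, ∀ t : ℝ≥0∞, t ≤ 1 → P θ {y | f y ≤ t} ≤ t)
    (g : 𝕐 → ℝ≥0∞) (hgmeas : Measurable g) (hg1 : ∀ y, g y ≤ 1)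
    (hdom : ∀ y, f y * (⨆ Q ∈ 𝒬, Q A) ≤ g y)
    (α : ℝ≥0∞) (hα : α ≤ 1) :
    (⨆ Q ∈ 𝒬, (Q ⊗ₘ P) {p : 𝕋 × 𝕐 | g p.2 ≤ α ∧ p.1 ∈ A}) ≤ α :=
  stmt7_general P 𝒬 h𝒬 A hA hQbar f hfvalid g hgmeas hdom α
end

section
/- Let π : 𝕐 × 𝕋 → [0,1] be measurable (the vacuous-prior IM's plausibility contour) with P θ {y : π(y,θ) ≤ t} ≤ t for every θ ∈ 𝕋 and t ∈ [0,1]. Let q : 𝕋 → [0,1] be measurable (the prior plausibility contour) with Q {θ : q(θ) ≤ t} ≤ t for every Q ∈ 𝒬 and t ∈ [0,1]. Fix w ∈ (0,1) and define the aggregated contour π_𝒬(y,θ) = min(1, min((1−w)⁻¹ · π(y,θ), w⁻¹ · q(θ))). Then for every Q ∈ 𝒬 and every α ∈ [0,1]: (Q ⊗ P){(θ,y) : π_𝒬(y,θ) ≤ α} ≤ α; i.e., the information-aggregation IM is strongly valid relative to 𝒬. -/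
open MeasureTheory ProbabilityTheory Set
open scoped ENNReal

/-! Below level `α < 1` the aggregated contour is at most `α` only where
`π ≤ (1 - w) α` or `q ≤ w α`. The first event has probability at most `(1 - w) α` under every
`P θ`, hence under `Q ⊗ P`; the second depends on `θ` alone, so its `Q ⊗ P`-probability is its
`Q`-probability, at most `w α`. The two bounds add up to `α`. -/

namespace MeasureTheory.Measure

variable {α β : Type*} [MeasurableSpace α] [MeasurableSpace β] {μ : Measure α} [SFinite μ]

lemma compProd_apply_le_of_forall_le {κ : Kernel α β} [IsSFiniteKernel κ] {s : Set (α × β)}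
    (hs : MeasurableSet s) {c : ℝ≥0∞} (h : ∀ a, κ a (Prod.mk a ⁻¹' s) ≤ c) :
    (μ ⊗ₘ κ) s ≤ c * μ univ := by
  rw [compProd_apply hs, ← lintegral_const]
  exact lintegral_mono h

lemma compProd_preimage_fst_le (κ : Kernel α β) [IsMarkovKernel κ] (s : Set α) :
    (μ ⊗ₘ κ) (Prod.fst ⁻¹' s) ≤ μ s := by
  calc (μ ⊗ₘ κ) (Prod.fst ⁻¹' s) ≤ (μ ⊗ₘ κ).fst s := le_map_apply measurable_fst.aemeasurable s
    _ = μ s := by rw [fst_compProd]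

end MeasureTheory.Measure

lemma ENNReal.setOf_min_one_min_inv_mul_le_subset {X : Type*} (f g : X → ℝ≥0∞)
    {a b c : ℝ≥0∞} (ha : a ≠ ∞) (hb : b ≠ ∞) (hc : c < 1) :
    {x | min 1 (min (a⁻¹ * f x) (b⁻¹ * g x)) ≤ c} ⊆ {x | f x ≤ c * a} ∪ {x | g x ≤ c * b} := by
  have hc_top : c ≠ ∞ := ne_top_of_lt hc
  intro x hx
  simp only [mem_ofPred_eq, min_le_iff, mem_union, ← ENNReal.div_eq_inv_mul] at hx ⊢
  rcases hx with h1 | hf | hg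
  · exact absurd h1 hc.not_ge
  · exact .inl ((ENNReal.div_le_iff_le_mul (.inr hc_top) (.inl ha)).1 hf)
  · exact .inr ((ENNReal.div_le_iff_le_mul (.inr hc_top) (.inl hb)).1 hg)

theorem stmt8_general {𝕋 𝕐 : Type*} [MeasurableSpace 𝕋] [MeasurableSpace 𝕐]
    (P : Kernel 𝕋 𝕐) [IsMarkovKernel P]
    (𝒬 : Set (Measure 𝕋)) (h𝒬 : ∀ Q ∈ 𝒬, IsProbabilityMeasure Q)
    (π : 𝕐 × 𝕋 → ℝ≥0∞) (hπmeas : Measurable π)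
    (hπvalid : ∀ θ : 𝕋, ∀ t : ℝ≥0∞, t ≤ 1 → P θ {y | π (y, θ) ≤ t} ≤ t)
    (q : 𝕋 → ℝ≥0∞)
    (hqvalid : ∀ Q ∈ 𝒬, ∀ t : ℝ≥0∞, t ≤ 1 → Q {θ | q θ ≤ t} ≤ t)
    (w : ℝ≥0∞) (hw1 : w < 1)
    (Q : Measure 𝕋) (hQ : Q ∈ 𝒬) (α : ℝ≥0∞) (hα : α ≤ 1) :
    (Q ⊗ₘ P) {p : 𝕋 × 𝕐 |
      min 1 (min ((1 - w)⁻¹ * π (p.2, p.1)) (w⁻¹ * q p.1)) ≤ α} ≤ α := by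
  have := h𝒬 Q hQ
  rcases hα.lt_or_eq with hα | rfl
  · have hπα : MeasurableSet {p : 𝕋 × 𝕐 | π (p.2, p.1) ≤ α * (1 - w)} :=
      measurableSet_le (hπmeas.comp measurable_swap) measurable_const
    calc (Q ⊗ₘ P) _
        ≤ (Q ⊗ₘ P) ({p | π (p.2, p.1) ≤ α * (1 - w)} ∪ Prod.fst ⁻¹' {θ | q θ ≤ α * w}) :=
          measure_mono (ENNReal.setOf_min_one_min_inv_mul_le_subset _ _
            (ENNReal.sub_ne_top ENNReal.one_ne_top) (ne_top_of_lt hw1) hα)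
      _ ≤ α * (1 - w) + α * w := by
          refine (measure_union_le _ _).trans (add_le_add ?_ ?_)
          · simpa using Measure.compProd_apply_le_of_forall_le (μ := Q) hπα
              fun θ ↦ hπvalid θ _ (mul_le_one' hα.le tsub_le_self)
          · exact (Measure.compProd_preimage_fst_le P _).trans
              (hqvalid Q hQ _ (mul_le_one' hα.le hw1.le))
      _ = α := by rw [← mul_add, tsub_add_cancel_of_le hw1.le, mul_one]
  · exact prob_le_one

/-- Proposition 3 (strong validity of the information-aggregation rule): if the
vacuous-prior contour `π` and the prior contour `q` are each calibrated
(`P θ {y : π(y,θ) ≤ t} ≤ t` and `Q {θ : q(θ) ≤ t} ≤ t` for all `Q ∈ 𝒬`), then for any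
weight `w ∈ (0,1)` the aggregated contour
`π_𝒬(y,θ) = min(1, min((1-w)⁻¹ π(y,θ), w⁻¹ q(θ)))` is strongly valid relative to `𝒬`. -/
theorem stmt8 {𝕋 𝕐 : Type*} [MeasurableSpace 𝕋] [MeasurableSpace 𝕐]
    (P : Kernel 𝕋 𝕐) [IsMarkovKernel P]
    (𝒬 : Set (Measure 𝕋)) (h𝒬 : ∀ Q ∈ 𝒬, IsProbabilityMeasure Q)
    (π : 𝕐 × 𝕋 → ℝ≥0∞) (hπmeas : Measurable π) (hπ1 : ∀ p, π p ≤ 1)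
    (hπvalid : ∀ θ : 𝕋, ∀ t : ℝ≥0∞, t ≤ 1 → P θ {y | π (y, θ) ≤ t} ≤ t)
    (q : 𝕋 → ℝ≥0∞) (hqmeas : Measurable q) (hq1 : ∀ θ, q θ ≤ 1)
    (hqvalid : ∀ Q ∈ 𝒬, ∀ t : ℝ≥0∞, t ≤ 1 → Q {θ | q θ ≤ t} ≤ t)
    (w : ℝ≥0∞) (hw0 : 0 < w) (hw1 : w < 1)
    (Q : Measure 𝕋) (hQ : Q ∈ 𝒬) (α : ℝ≥0∞) (hα : α ≤ 1) :
    (Q ⊗ₘ P) {p : 𝕋 × 𝕐 |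
      min 1 (min ((1 - w)⁻¹ * π (p.2, p.1)) (w⁻¹ * q p.1)) ≤ α} ≤ α :=
  stmt8_general P 𝒬 h𝒬 π hπmeas hπvalid q hqvalid w hw1 Q hQ α hα
end

section
/- Let Π̄ be an IM output (each Π̄_y : Set 𝕋 → [0,1] monotone) with plausibility contour π_y(θ) = Π̄_y {θ}. Assume {(θ,y) : π_y(θ) ≤ α} is measurable for each α ∈ [0,1] and that the vacuous-prior uniformity condition holds: P θ {y : π_y(θ) ≤ α} ≤ α for every θ ∈ 𝕋 and α ∈ [0,1]. Then for EVERY probability measure Q on 𝕋 and every α ∈ [0,1]: (Q ⊗ P){(θ,y) : there exists A ⊆ 𝕋 with θ ∈ A and Π̄_y(A) ≤ α} ≤ α; i.e., the IM is strongly valid relative to any credal set 𝒬. -/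
open MeasureTheory ProbabilityTheory Set
open scoped ENNReal

/-!
By monotonicity of `Π̄_y`, some `A ∋ θ` has `Π̄_y(A) ≤ α` iff the singleton does, i.e. iff
`π_y(θ) ≤ α`. The `θ`-section of that event has `P θ`-mass at most `α` by the uniformity
condition, and integrating the sections against `Q` bounds its `Q ⊗ P`-mass by `α`.
-/

theorem Monotone.exists_mem_and_le_iff {α β : Type*} [Preorder β] {f : Set α → β}
    (hf : Monotone f) (a : α) (c : β) : (∃ A, a ∈ A ∧ f A ≤ c) ↔ f {a} ≤ c :=
  ⟨fun ⟨_, haA, hA⟩ => (hf (singleton_subset_iff.2 haA)).trans hA,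
    fun h => ⟨{a}, rfl, h⟩⟩

theorem MeasureTheory.Measure.compProd_apply_le_of_ae_le {α β : Type*} [MeasurableSpace α]
    [MeasurableSpace β] {μ : Measure α} [IsProbabilityMeasure μ] {κ : Kernel α β}
    [IsSFiniteKernel κ] {s : Set (α × β)} {c : ℝ≥0∞} (hs : MeasurableSet s)
    (h : ∀ᵐ a ∂μ, κ a (Prod.mk a ⁻¹' s) ≤ c) : (μ ⊗ₘ κ) s ≤ c := by
  rw [Measure.compProd_apply hs]
  exact lintegral_le_const h

theorem stmt9_general {𝕋 𝕐 : Type*} [MeasurableSpace 𝕋] [MeasurableSpace 𝕐]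
    (P : Kernel 𝕋 𝕐) [IsMarkovKernel P]
    (Pi : 𝕐 → Set 𝕋 → ℝ≥0∞)
    (hmono : ∀ y : 𝕐, ∀ A B : Set 𝕋, A ⊆ B → Pi y A ≤ Pi y B)
    (hmeas : ∀ α : ℝ≥0∞, α ≤ 1 → MeasurableSet {p : 𝕋 × 𝕐 | Pi p.2 {p.1} ≤ α})
    (hvalid : ∀ θ : 𝕋, ∀ α : ℝ≥0∞, α ≤ 1 → P θ {y | Pi y {θ} ≤ α} ≤ α)
    (Q : Measure 𝕋) [IsProbabilityMeasure Q]
    (α : ℝ≥0∞) (hα : α ≤ 1) :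
    (Q ⊗ₘ P) {p : 𝕋 × 𝕐 | ∃ A : Set 𝕋, p.1 ∈ A ∧ Pi p.2 A ≤ α} ≤ α := by
  have hcontour : {p : 𝕋 × 𝕐 | ∃ A : Set 𝕋, p.1 ∈ A ∧ Pi p.2 A ≤ α}
      = {p : 𝕋 × 𝕐 | Pi p.2 {p.1} ≤ α} :=
    ext fun p => Monotone.exists_mem_and_le_iff (fun A B => hmono p.2 A B) p.1 α
  rw [hcontour]
  exact Measure.compProd_apply_le_of_ae_le (hmeas α hα) (.of_forall fun θ => hvalid θ α hα)

/-- Proposition 4: a vacuous-prior IM whose plausibility contour `π_y(θ) = Π̄_y {θ}`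
satisfies the uniformity condition `P θ {y : π_y(θ) ≤ α} ≤ α` is strongly valid relative
to every prior: for every probability measure `Q` on `𝕋` and every `α ∈ [0,1]`,
`(Q ⊗ P){(θ,y) : ∃ A ∋ θ, Π̄_y(A) ≤ α} ≤ α`. -/
theorem stmt9 {𝕋 𝕐 : Type*} [MeasurableSpace 𝕋] [MeasurableSpace 𝕐]
    (P : Kernel 𝕋 𝕐) [IsMarkovKernel P]
    (Pi : 𝕐 → Set 𝕋 → ℝ≥0∞)
    (hmono : ∀ y : 𝕐, ∀ A B : Set 𝕋, A ⊆ B → Pi y A ≤ Pi y B)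
    (hle1 : ∀ y A, Pi y A ≤ 1)
    (hmeas : ∀ α : ℝ≥0∞, α ≤ 1 → MeasurableSet {p : 𝕋 × 𝕐 | Pi p.2 {p.1} ≤ α})
    (hvalid : ∀ θ : 𝕋, ∀ α : ℝ≥0∞, α ≤ 1 → P θ {y | Pi y {θ} ≤ α} ≤ α)
    (Q : Measure 𝕋) [IsProbabilityMeasure Q]
    (α : ℝ≥0∞) (hα : α ≤ 1) :
    (Q ⊗ₘ P) {p : 𝕋 × 𝕐 | ∃ A : Set 𝕋, p.1 ∈ A ∧ Pi p.2 A ≤ α} ≤ α :=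
  stmt9_general P Pi hmono hmeas hvalid Q α hα
end

section
/- Suppose that for every measurable A ⊆ 𝕋 the map y ↦ Π̄_y(A) is measurable and the vacuous-prior validity bound holds: P θ {y : Π̄_y(A) ≤ α} ≤ α for every θ ∈ A and α ∈ [0,1]. Then for every probability measure Q on 𝕋, every measurable A ⊆ 𝕋, and every α ∈ [0,1]: ∫_A P θ {y : Π̄_y(A) ≤ α} dQ(θ) ≤ α · Q(A); equivalently, whenever Q(A) > 0, the conditional probability under the joint distribution Q ⊗ P that Π̄_Y(A) ≤ α, given that the parameter lies in A, is at most α (conditional validity relative to any credal set 𝒬). -/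
open MeasureTheory ProbabilityTheory Set
open scoped ENNReal

/-! The vacuous-prior bound `P θ {y | Π̄_y(A) ≤ α} ≤ α` holds pointwise on `A`, so averaging it
over `θ ∈ A` against any `Q` gives `α · Q(A)`; and since the joint event
`{Π̄_Y(A) ≤ α, θ ∈ A}` is the rectangle `A × {y | Π̄_y(A) ≤ α}`, its `Q ⊗ P`-mass is exactly
that average. -/

namespace MeasureTheory

variable {α β : Type*} [MeasurableSpace α] [MeasurableSpace β]

lemma setLIntegral_le_mul_of_forall_le {μ : Measure α} {s : Set α} {f : α → ℝ≥0∞}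
    {c : ℝ≥0∞} (hf : ∀ x ∈ s, f x ≤ c) : ∫⁻ x in s, f x ∂μ ≤ c * μ s :=
  (setLIntegral_mono measurable_const hf).trans_eq (setLIntegral_const s c)

lemma Measure.compProd_prod_le_mul_s10 {μ : Measure α} [SFinite μ] {κ : Kernel α β}
    [IsSFiniteKernel κ] {s : Set α} {t : Set β} (hs : MeasurableSet s) (ht : MeasurableSet t)
    {c : ℝ≥0∞} (h : ∀ a ∈ s, κ a t ≤ c) : (μ ⊗ₘ κ) (s ×ˢ t) ≤ c * μ s := by
  rw [Measure.compProd_apply_prod hs ht]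
  exact setLIntegral_le_mul_of_forall_le h

end MeasureTheory

/-- Proposition 5 (conditional validity): if the IM satisfies the vacuous-prior validity
bound `P θ {y : Π̄_y(A) ≤ α} ≤ α` for all measurable `A`, `θ ∈ A` and `α ∈ [0,1]`, then
for every probability measure `Q` on `𝕋`, measurable `A` and `α ∈ [0,1]`,
`∫_A P θ {y : Π̄_y(A) ≤ α} dQ(θ) ≤ α · Q(A)`; equivalently, whenever `Q(A) > 0`, the
conditional probability under `Q ⊗ P` that `Π̄_Y(A) ≤ α`, given the parameter lies in
`A`, is at most `α`. -/
theorem stmt10 {𝕋 𝕐 : Type*} [MeasurableSpace 𝕋] [MeasurableSpace 𝕐]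
    (P : Kernel 𝕋 𝕐) [IsMarkovKernel P]
    (Pi : 𝕐 → Set 𝕋 → ℝ≥0∞)
    (hmeas : ∀ A : Set 𝕋, MeasurableSet A → Measurable fun y => Pi y A)
    (hvalid : ∀ A : Set 𝕋, MeasurableSet A → ∀ θ ∈ A, ∀ α : ℝ≥0∞, α ≤ 1 →
      P θ {y | Pi y A ≤ α} ≤ α)
    (Q : Measure 𝕋) [IsProbabilityMeasure Q]
    (A : Set 𝕋) (hA : MeasurableSet A)
    (α : ℝ≥0∞) (hα : α ≤ 1) :
    (∫⁻ θ in A, P θ {y | Pi y A ≤ α} ∂Q) ≤ α * Q A ∧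
      (0 < Q A →
        (Q ⊗ₘ P) {p : 𝕋 × 𝕐 | Pi p.2 A ≤ α ∧ p.1 ∈ A} / Q A ≤ α) := by
  have hbound : ∀ θ ∈ A, P θ {y | Pi y A ≤ α} ≤ α := fun θ hθ => hvalid A hA θ hθ α hα
  refine ⟨setLIntegral_le_mul_of_forall_le hbound, fun _ => ?_⟩
  have hrect : {p : 𝕋 × 𝕐 | Pi p.2 A ≤ α ∧ p.1 ∈ A} = A ×ˢ {y | Pi y A ≤ α} := by
    ext p
    exact and_comm
  rw [hrect]
  exact ENNReal.div_le_of_le_mul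
    (Measure.compProd_prod_le_mul_s10 hA (hmeas A hA measurableSet_Iic) hbound)
end

section
/- Let T_1 ⊆ T_2 ⊆ ⋯ ⊆ T_N be subsets of 𝕋 and m_1, …, m_N ≥ 0 with Σ_j m_j = 1. Let Φ : Set 𝕋 → ℝ be monotone (B ⊆ B' implies Φ(B) ≤ Φ(B')) with Φ(∅) = 0 and Φ(B) ≤ 1 for every B. Assume d := Σ_j m_j · Φ(T_j) > 0, and note d ≤ 1. Let A ⊆ 𝕋 be nonempty and suppose there exists k such that A ∩ T_j = ∅ for all j < k and A ⊆ T_j for all j ≥ k. Then (Σ_j m_j · Φ(A ∩ T_j)) / d ≥ Φ(A) · Σ_{j ≥ k} m_j, and moreover Σ_{j ≥ k} m_j = Σ_{j : T_j ∩ A ≠ ∅} m_j (the prior upper probability Q̄(A) of the random set with focal elements T_j and masses m_j). -/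
open Classical Set

/-
Because `A` lies in a single layer of the nested focal elements, `A ∩ T j` is either `∅` or `A`,
so the numerator `∑ j, m j * Φ (A ∩ T j)` is exactly `Φ A · ∑_{j ≥ k} m j`. The normalizing
constant `d = ∑ j, m j * Φ (T j)` is an average of values at most `1`, so dividing by it can only
increase the nonnegative numerator. The layers `j ≥ k` are exactly those meeting the nonempty `A`.
-/

section LayerSums

variable {ι 𝕋 : Type*} [Fintype ι]

theorem sum_mul_le_sum_of_le_one (m f : ι → ℝ) (hm0 : ∀ j, 0 ≤ m j) (hf1 : ∀ j, f j ≤ 1) :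
    ∑ j, m j * f j ≤ ∑ j, m j :=
  Finset.sum_le_sum fun j _ => mul_le_of_le_one_right (hm0 j) (hf1 j)

theorem sum_mul_inter_eq_of_layer (T : ι → Set 𝕋) (m : ι → ℝ) (Φ : Set 𝕋 → ℝ)
    (hempty : Φ ∅ = 0) (A : Set 𝕋) (p : ι → Prop) [DecidablePred p]
    (hin : ∀ j, p j → A ⊆ T j) (hout : ∀ j, ¬ p j → A ∩ T j = ∅) :
    ∑ j, m j * Φ (A ∩ T j) = Φ A * ∑ j ∈ Finset.univ.filter p, m j := by
  rw [Finset.sum_filter, Finset.mul_sum]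
  refine Finset.sum_congr rfl fun j _ => ?_
  by_cases hj : p j
  · rw [if_pos hj, inter_eq_left.mpr (hin j hj), mul_comm]
  · rw [if_neg hj, hout j hj, hempty, mul_zero, mul_zero]

theorem filter_eq_filter_inter_nonempty_of_layer (T : ι → Set 𝕋) {A : Set 𝕋}
    (hA : A.Nonempty) (p : ι → Prop) [DecidablePred p]
    (hin : ∀ j, p j → A ⊆ T j) (hout : ∀ j, ¬ p j → A ∩ T j = ∅) :
    Finset.univ.filter p = Finset.univ.filter fun j => (T j ∩ A).Nonempty := by
  refine Finset.filter_congr fun j _ => ⟨fun hj => ?_, fun hmeet => ?_⟩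
  · obtain ⟨a, ha⟩ := hA
    exact ⟨a, hin j hj ha, ha⟩
  · by_contra hj
    rw [inter_comm] at hmeet
    exact hmeet.ne_empty (hout j hj)

end LayerSums

theorem stmt13_general {𝕋 : Type*} (N : ℕ) (T : Fin N → Set 𝕋)
    (m : Fin N → ℝ) (hm0 : ∀ j, 0 ≤ m j) (hm1 : ∑ j, m j = 1)
    (Φ : Set 𝕋 → ℝ)
    (hmono : ∀ B B' : Set 𝕋, B ⊆ B' → Φ B ≤ Φ B')
    (hempty : Φ (∅ : Set 𝕋) = 0) (hle1 : ∀ B, Φ B ≤ 1)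
    (hd : 0 < ∑ j, m j * Φ (T j))
    (A : Set 𝕋) (hAne : A.Nonempty)
    (k : Fin N) (hk : ∀ j : Fin N, (j < k → A ∩ T j = ∅) ∧ (k ≤ j → A ⊆ T j)) :
    (∑ j, m j * Φ (T j)) ≤ 1 ∧
      Φ A * (∑ j ∈ Finset.univ.filter fun j => k ≤ j, m j) ≤
        (∑ j, m j * Φ (A ∩ T j)) / (∑ j, m j * Φ (T j)) ∧
      (∑ j ∈ Finset.univ.filter fun j => k ≤ j, m j) =
        ∑ j ∈ Finset.univ.filter fun j => (T j ∩ A).Nonempty, m j := by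
  have hin : ∀ j, k ≤ j → A ⊆ T j := fun j => (hk j).2
  have hout : ∀ j, ¬ k ≤ j → A ∩ T j = ∅ := fun j hj => (hk j).1 (not_le.mp hj)
  have hd1 : ∑ j, m j * Φ (T j) ≤ 1 :=
    hm1 ▸ sum_mul_le_sum_of_le_one m (fun j => Φ (T j)) hm0 fun j => hle1 (T j)
  have hΦA : 0 ≤ Φ A := hempty ▸ hmono ∅ A (empty_subset A)
  refine ⟨hd1, ?_, ?_⟩
  · rw [sum_mul_inter_eq_of_layer T m Φ hempty A _ hin hout]
    exact le_div_self (mul_nonneg hΦA (Finset.sum_nonneg fun j _ => hm0 j)) hd hd1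
  · rw [filter_eq_filter_inter_nonempty_of_layer T hAne _ hin hout]

/-- The key dominance inequality in the proof of Proposition 6: for a monotone set
function `Φ` with `Φ(∅) = 0` and `Φ ≤ 1`, nested sets `T 1 ⊆ ⋯ ⊆ T N`, nonnegative
masses summing to one, and a nonempty `A` contained in a single layer of the nested
focal elements, the Dempster's-rule combined upper probability satisfies
`(∑_j m_j Φ(A ∩ T_j)) / d ≥ Φ(A) · ∑_{j ≥ k} m_j`, where `0 < d := ∑_j m_j Φ(T_j) ≤ 1`;
moreover `∑_{j ≥ k} m_j = ∑_{j : T_j ∩ A ≠ ∅} m_j`, the prior upper probability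
`Q̄(A)`. -/
theorem stmt13 {𝕋 : Type*} (N : ℕ) (T : Fin N → Set 𝕋)
    (hTnested : ∀ i j : Fin N, i ≤ j → T i ⊆ T j)
    (m : Fin N → ℝ) (hm0 : ∀ j, 0 ≤ m j) (hm1 : ∑ j, m j = 1)
    (Φ : Set 𝕋 → ℝ)
    (hmono : ∀ B B' : Set 𝕋, B ⊆ B' → Φ B ≤ Φ B')
    (hempty : Φ (∅ : Set 𝕋) = 0) (hle1 : ∀ B, Φ B ≤ 1)
    (hd : 0 < ∑ j, m j * Φ (T j))
    (A : Set 𝕋) (hAne : A.Nonempty)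
    (k : Fin N) (hk : ∀ j : Fin N, (j < k → A ∩ T j = ∅) ∧ (k ≤ j → A ⊆ T j)) :
    (∑ j, m j * Φ (T j)) ≤ 1 ∧
      Φ A * (∑ j ∈ Finset.univ.filter fun j => k ≤ j, m j) ≤
        (∑ j, m j * Φ (A ∩ T j)) / (∑ j, m j * Φ (T j)) ∧
      (∑ j ∈ Finset.univ.filter fun j => k ≤ j, m j) =
        ∑ j ∈ Finset.univ.filter fun j => (T j ∩ A).Nonempty, m j :=
  stmt13_general N T m hm0 hm1 Φ hmono hempty hle1 hd A hAne k hk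
end

section
/- Let h : 𝕐 × 𝕋 → ℝ be measurable and define the validified plausibility contour π_𝒬(y,θ) = ⨆_{Q ∈ 𝒬} (Q ⊗ P){(θ',y') : h(y',θ') ≤ h(y,θ)}. Then for every Q ∈ 𝒬 and every α ∈ [0,1]: (Q ⊗ P){(θ,y) : π_𝒬(y,θ) ≤ α} ≤ α; i.e., the consonant IM defined by π_𝒬 is strongly valid relative to 𝒬. (The event {(θ,y) : π_𝒬(y,θ) ≤ α} is measurable, since π_𝒬 is a monotone nondecreasing transform of the measurable function h, and it is contained in the measurable set {(θ,y) : (Q ⊗ P){h ≤ h(y,θ)} ≤ α}, whose (Q ⊗ P)-probability is at most α by the probability-integral-transform property of distribution functions.) -/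
/-!
Put `Q' = Q` in the supremum defining the contour: wherever the contour is at most `α`, so is
the distribution function `t ↦ (Q ⊗ P){h ≤ t}` evaluated at `h`. The latter event is the
preimage under `h` of the lower set `S` of levels where the distribution function is at most `α`.
Exhausting `S` by countably many `Iic t`, `t ∈ S`, continuity from below bounds its measure by `α`.
-/

open MeasureTheory ProbabilityTheory Set
open scoped ENNReal

section ProbabilityIntegralTransform

variable {X β : Type*} [MeasurableSpace X] [LinearOrder β] [TopologicalSpace β]
  [OrderTopology β] [SecondCountableTopology β]

theorem IsLowerSet.measure_preimage_eq_iSup {S : Set β} (hS : IsLowerSet S) (ν : Measure X)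
    (g : X → β) : ν (g ⁻¹' S) = ⨆ t : S, ν (g ⁻¹' Iic (t : β)) := by
  -- Makes the subspace topology on `S` its order topology, so `atTop` on `S` is countably generated.
  have := hS.ordConnected
  have hunion : g ⁻¹' S = ⋃ t : S, g ⁻¹' Iic (t : β) := by
    ext x
    simp only [mem_preimage, mem_iUnion, mem_Iic, Subtype.exists, exists_prop]
    exact ⟨fun hx => ⟨g x, hx, le_rfl⟩, fun ⟨t, ht, hxt⟩ => hS hxt ht⟩
  rw [hunion]
  exact Monotone.measure_iUnion fun s t hst => preimage_mono (Iic_subset_Iic.mpr hst)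

theorem measure_setOf_measure_sublevel_le (ν : Measure X) (g : X → β) (α : ℝ≥0∞) :
    ν {x | ν {y | g y ≤ g x} ≤ α} ≤ α := by
  have hS : IsLowerSet {t : β | ν (g ⁻¹' Iic t) ≤ α} := fun s t hts hs =>
    (measure_mono (preimage_mono (Iic_subset_Iic.mpr hts))).trans hs
  calc ν {x | ν {y | g y ≤ g x} ≤ α}
      = ν (g ⁻¹' {t | ν (g ⁻¹' Iic t) ≤ α}) := rfl
    _ = ⨆ t : {t : β | ν (g ⁻¹' Iic t) ≤ α}, ν (g ⁻¹' Iic (t : β)) :=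
        hS.measure_preimage_eq_iSup ν g
    _ ≤ α := iSup_le fun t => t.2

end ProbabilityIntegralTransform

theorem stmt15_general {𝕋 𝕐 : Type*} [MeasurableSpace 𝕋] [MeasurableSpace 𝕐]
    (P : Kernel 𝕋 𝕐)
    (𝒬 : Set (Measure 𝕋))
    (h : 𝕐 × 𝕋 → ℝ)
    (Q : Measure 𝕋) (hQ : Q ∈ 𝒬) (α : ℝ≥0∞) :
    (Q ⊗ₘ P) {p : 𝕋 × 𝕐 |
      (⨆ Q' ∈ 𝒬, (Q' ⊗ₘ P) {p' : 𝕋 × 𝕐 | h (p'.2, p'.1) ≤ h (p.2, p.1)}) ≤ α} ≤ α := by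
  refine (measure_mono fun p hp => ?_).trans
    (measure_setOf_measure_sublevel_le (Q ⊗ₘ P) (fun p => h (p.2, p.1)) α)
  exact (le_biSup (fun Q' => (Q' ⊗ₘ P) {p' | h (p'.2, p'.1) ≤ h (p.2, p.1)}) hQ).trans hp

/-- Proposition 8, Part 1 (validification): for any measurable `h : 𝕐 × 𝕋 → ℝ`, the
validified plausibility contour
`π_𝒬(y,θ) = ⨆_{Q ∈ 𝒬} (Q ⊗ P){(θ',y') : h(y',θ') ≤ h(y,θ)}` is strongly valid relative
to `𝒬`: for every `Q ∈ 𝒬` and `α ∈ [0,1]`,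
`(Q ⊗ P){(θ,y) : π_𝒬(y,θ) ≤ α} ≤ α`. -/
theorem stmt15 {𝕋 𝕐 : Type*} [MeasurableSpace 𝕋] [MeasurableSpace 𝕐]
    (P : Kernel 𝕋 𝕐) [IsMarkovKernel P]
    (𝒬 : Set (Measure 𝕋)) (h𝒬 : ∀ Q ∈ 𝒬, IsProbabilityMeasure Q)
    (h : 𝕐 × 𝕋 → ℝ) (hhmeas : Measurable h)
    (Q : Measure 𝕋) (hQ : Q ∈ 𝒬) (α : ℝ≥0∞) (hα : α ≤ 1) :
    (Q ⊗ₘ P) {p : 𝕋 × 𝕐 |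
      (⨆ Q' ∈ 𝒬, (Q' ⊗ₘ P) {p' : 𝕋 × 𝕐 | h (p'.2, p'.1) ≤ h (p.2, p.1)}) ≤ α} ≤ α :=
  stmt15_general P 𝒬 h Q hQ α
end

section
/- Let (Ω, 𝒜, P) be a probability space, let α ∈ [0,1], set s = 1 − √(1−α), and let U, V : Ω → [0,1] be random variables such that P{U ≤ s} = s, P{V ≤ s} = s, and P{U ≤ s and V ≤ s} ≥ P{U ≤ s} · P{V ≤ s} (e.g., U and V independent, or suitably positively correlated). Then P{ min(1 − (1−U)², 1 − (1−V)²) ≤ α } ≤ α. -/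
/-!
With `s = 1 - √(1 - α)` the map `u ↦ 1 - (1 - u)²` is increasing on `[0, 1]` and sends `s` to `α`,
so the fused contour is at most `α` exactly when `U ≤ s` or `V ≤ s`. By inclusion–exclusion and the
positive-dependence hypothesis, the union has probability at most `s + s - s·s = α`.
-/

open MeasureTheory Set
open scoped ENNReal

lemma one_sub_one_sub_sq_le_iff {α u : ℝ} (hu : u ≤ 1) :
    1 - (1 - u) ^ 2 ≤ α ↔ u ≤ 1 - Real.sqrt (1 - α) := by
  rw [le_sub_comm, Real.sqrt_le_left (sub_nonneg.mpr hu)]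
  constructor <;> intro h <;> linarith

namespace MeasureTheory

variable {Ω : Type*} [MeasurableSpace Ω] {μ : Measure Ω}

lemma measure_union_add_inter_le (A B : Set Ω) : μ (A ∪ B) + μ (A ∩ B) ≤ μ A + μ B :=
  calc μ (A ∪ B) + μ (A ∩ B)
      ≤ μ (A ∪ toMeasurable μ B) + μ (A ∩ toMeasurable μ B) := by
        gcongr <;> exact subset_toMeasurable μ B
    _ = μ A + μ B := by
        rw [measure_union_add_inter A (measurableSet_toMeasurable μ B), measure_toMeasurable]

lemma measure_union_le_add_sub_mul [IsFiniteMeasure μ] {A B : Set Ω}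
    (hAB : μ A * μ B ≤ μ (A ∩ B)) : μ (A ∪ B) ≤ μ A + μ B - μ A * μ B := by
  refine ENNReal.le_sub_of_add_le_right (ENNReal.mul_ne_top (measure_ne_top μ A)
    (measure_ne_top μ B)) ?_
  calc μ (A ∪ B) + μ A * μ B ≤ μ (A ∪ B) + μ (A ∩ B) := by gcongr
    _ ≤ μ A + μ B := measure_union_add_inter_le A B

end MeasureTheory

theorem stmt17_general {Ω : Type*} [MeasurableSpace Ω] (P : Measure Ω) [IsProbabilityMeasure P]
    (α : ℝ) (hα : α ∈ Icc (0 : ℝ) 1)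
    (s : ℝ) (hs : s = 1 - Real.sqrt (1 - α))
    (U V : Ω → ℝ)
    (hU01 : ∀ ω, U ω ∈ Icc (0 : ℝ) 1) (hV01 : ∀ ω, V ω ∈ Icc (0 : ℝ) 1)
    (hU : P {ω | U ω ≤ s} = ENNReal.ofReal s)
    (hV : P {ω | V ω ≤ s} = ENNReal.ofReal s)
    (hUV : P {ω | U ω ≤ s} * P {ω | V ω ≤ s} ≤ P {ω | U ω ≤ s ∧ V ω ≤ s}) :
    P {ω | min (1 - (1 - U ω) ^ 2) (1 - (1 - V ω) ^ 2) ≤ α} ≤ ENNReal.ofReal α := by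
  have hs0 : 0 ≤ s := by
    rw [hs, sub_nonneg, Real.sqrt_le_one]
    linarith [hα.1]
  have hαs : α = s + s - s * s := by
    rw [hs]
    linear_combination Real.sq_sqrt (sub_nonneg.mpr hα.2)
  have hfused : {ω | min (1 - (1 - U ω) ^ 2) (1 - (1 - V ω) ^ 2) ≤ α}
      = {ω | U ω ≤ s} ∪ {ω | V ω ≤ s} := by
    ext ω
    simp only [mem_ofPred_eq, mem_union, min_le_iff, hs,
      one_sub_one_sub_sq_le_iff (hU01 ω).2, one_sub_one_sub_sq_le_iff (hV01 ω).2]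
  calc P {ω | min (1 - (1 - U ω) ^ 2) (1 - (1 - V ω) ^ 2) ≤ α}
      ≤ P {ω | U ω ≤ s} + P {ω | V ω ≤ s} - P {ω | U ω ≤ s} * P {ω | V ω ≤ s} := by
        rw [hfused]
        exact measure_union_le_add_sub_mul hUV
    _ = ENNReal.ofReal α := by
        rw [hU, hV, hαs, ENNReal.ofReal_sub _ (mul_nonneg hs0 hs0), ENNReal.ofReal_add hs0 hs0,
          ENNReal.ofReal_mul hs0]

/-- The strong-validity bound from the Remark of Section 5.2: if `U, V` are
`[0,1]`-valued random variables, `s = 1 - √(1-α)`, `P{U ≤ s} = s`, `P{V ≤ s} = s`, and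
`P{U ≤ s, V ≤ s} ≥ P{U ≤ s}·P{V ≤ s}` (e.g., independence or positive correlation),
then `P{min(1-(1-U)², 1-(1-V)²) ≤ α} ≤ α`. -/
theorem stmt17 {Ω : Type*} [MeasurableSpace Ω] (P : Measure Ω) [IsProbabilityMeasure P]
    (α : ℝ) (hα : α ∈ Icc (0 : ℝ) 1)
    (s : ℝ) (hs : s = 1 - Real.sqrt (1 - α))
    (U V : Ω → ℝ) (hUmeas : Measurable U) (hVmeas : Measurable V)
    (hU01 : ∀ ω, U ω ∈ Icc (0 : ℝ) 1) (hV01 : ∀ ω, V ω ∈ Icc (0 : ℝ) 1)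
    (hU : P {ω | U ω ≤ s} = ENNReal.ofReal s)
    (hV : P {ω | V ω ≤ s} = ENNReal.ofReal s)
    (hUV : P {ω | U ω ≤ s} * P {ω | V ω ≤ s} ≤ P {ω | U ω ≤ s ∧ V ω ≤ s}) :
    P {ω | min (1 - (1 - U ω) ^ 2) (1 - (1 - V ω) ^ 2) ≤ α} ≤ ENNReal.ofReal α :=
  stmt17_general P α hα s hs U V hU01 hV01 hU hV hUV
end
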